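/- Let φ : [0,1] → ℝ be twice continuously differentiable vanishing outside a compact subset of (0,1), and let u ∈ C^4([0,1]). With |γ'| = √(1+(u')^2) and k = u''/|γ'|^3, one has ∫_0^1 [2 u'' φ'' / |γ'|^5 − 5 (u'')^2 u' φ' / |γ'|^7] dx = ∫_0^1 [2 |γ'|^{-1} (k'/|γ'|)' + k^3] φ dx. -/

import Mathlib

open MeasureTheory intervalIntegral

/-- `|γ'| = √(1+(u')²)` for the graph of `u`. -/
noncomputable def gg (u : ℝ → ℝ) (x : ℝ) : ℝ := Real.sqrt (1 + (deriv u x) ^ 2)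

/-- signed curvature `k = u''/|γ'|³` of the graph of `u`. -/
noncomputable def kk (u : ℝ → ℝ) (x : ℝ) : ℝ := deriv (deriv u) x / (gg u x) ^ 3

lemma my_ibp (f ψ : ℝ → ℝ) (hf : Differentiable ℝ f) (hf' : Continuous (deriv f))
    (hψ : Differentiable ℝ ψ) (hψ' : Continuous (deriv ψ))
    (hsupp : tsupport ψ ⊆ Set.Ioo (0:ℝ) 1) :
    ∫ x in (0:ℝ)..1, f x * deriv ψ x = - ∫ x in (0:ℝ)..1, deriv f x * ψ x := by
  have h0 : ψ 0 = 0 := image_eq_zero_of_notMem_tsupport (fun h => lt_irrefl _ (hsupp h).1)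
  have h1 : ψ 1 = 0 := image_eq_zero_of_notMem_tsupport (fun h => lt_irrefl _ (hsupp h).2)
  have hd : ∀ x ∈ Set.uIcc (0:ℝ) 1, HasDerivAt (fun y => f y * ψ y)
      (deriv f x * ψ x + f x * deriv ψ x) x := fun x _ =>
    ((hf x).hasDerivAt).mul ((hψ x).hasDerivAt)
  have hint : IntervalIntegrable (fun x => deriv f x * ψ x + f x * deriv ψ x) volume 0 1 :=
    (((hf'.mul hψ.continuous).add (hf.continuous.mul hψ'))).intervalIntegrable 0 1
  have key := intervalIntegral.integral_eq_sub_of_hasDerivAt hd hint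
  rw [h0, h1, mul_zero, mul_zero, sub_zero] at key
  have hs1 : IntervalIntegrable (fun x => deriv f x * ψ x) volume 0 1 :=
    (hf'.mul hψ.continuous).intervalIntegrable 0 1
  have hs2 : IntervalIntegrable (fun x => f x * deriv ψ x) volume 0 1 :=
    (hf.continuous.mul hψ').intervalIntegrable 0 1
  rw [intervalIntegral.integral_add hs1 hs2] at key
  linarith

lemma auxF {w w3 v g : ℝ → ℝ} {x : ℝ} (hw : HasDerivAt w (w3 x) x)
    (hg : HasDerivAt g (v x * w x / g x) x) (hgne : g x ≠ 0) :
    HasDerivAt (fun y => 2 * w y / g y ^ 5)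
      ((2 * w3 x * g x ^ 2 - 10 * v x * w x ^ 2) / g x ^ 7) x := by
  have h := (hw.const_mul 2).div (hg.pow 5) (pow_ne_zero 5 hgne)
  refine h.congr_deriv ?_
  simp only [Pi.pow_apply, Pi.mul_apply, Pi.sub_apply, Pi.div_apply]
  field_simp
  ring

lemma auxG {w w3 v g : ℝ → ℝ} {x : ℝ} (hv : HasDerivAt v (w x) x) (hw : HasDerivAt w (w3 x) x)
    (hg : HasDerivAt g (v x * w x / g x) x) (hgne : g x ≠ 0) :
    HasDerivAt (fun y => 5 * w y ^ 2 * v y / g y ^ 7)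
      (((10 * v x * w x * w3 x + 5 * w x ^ 3) * g x ^ 2 - 35 * v x ^ 2 * w x ^ 3) / g x ^ 9) x := by
  have h := (((hw.pow 2).const_mul 5).mul hv).div (hg.pow 7) (pow_ne_zero 7 hgne)
  refine h.congr_deriv ?_
  simp only [Pi.pow_apply, Pi.mul_apply, Pi.sub_apply, Pi.div_apply]
  field_simp
  ring

lemma auxF2 {w w3 w4 v g : ℝ → ℝ} {x : ℝ} (hv : HasDerivAt v (w x) x)
    (hw : HasDerivAt w (w3 x) x) (hw3 : HasDerivAt w3 (w4 x) x)
    (hg : HasDerivAt g (v x * w x / g x) x) (hgne : g x ≠ 0) :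
    HasDerivAt (fun y => (2 * w3 y * g y ^ 2 - 10 * v y * w y ^ 2) / g y ^ 7)
      (((2 * w4 x * g x ^ 2 + 4 * v x * w x * w3 x - 10 * w x ^ 3 - 20 * v x * w x * w3 x) * g x ^ 2
          - 7 * v x * w x * (2 * w3 x * g x ^ 2 - 10 * v x * w x ^ 2)) / g x ^ 9) x := by
  have h := ((((hw3.const_mul 2).mul (hg.pow 2)).sub ((hv.const_mul 10).mul (hw.pow 2))).div
      (hg.pow 7) (pow_ne_zero 7 hgne))
  refine h.congr_deriv ?_
  simp only [Pi.pow_apply, Pi.mul_apply, Pi.sub_apply, Pi.div_apply]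
  field_simp
  ring

lemma auxK {w w3 v g : ℝ → ℝ} {x : ℝ} (hw : HasDerivAt w (w3 x) x)
    (hg : HasDerivAt g (v x * w x / g x) x) (hgne : g x ≠ 0) :
    HasDerivAt (fun y => w y / g y ^ 3)
      ((w3 x * g x ^ 2 - 3 * v x * w x ^ 2) / g x ^ 5) x := by
  have h := hw.div (hg.pow 3) (pow_ne_zero 3 hgne)
  refine h.congr_deriv ?_
  simp only [Pi.pow_apply, Pi.mul_apply, Pi.sub_apply, Pi.div_apply]
  field_simp
  ring

lemma auxK2 {w w3 w4 v g : ℝ → ℝ} {x : ℝ} (hv : HasDerivAt v (w x) x)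
    (hw : HasDerivAt w (w3 x) x) (hw3 : HasDerivAt w3 (w4 x) x)
    (hg : HasDerivAt g (v x * w x / g x) x) (hgne : g x ≠ 0) :
    HasDerivAt (fun y => ((w3 y * g y ^ 2 - 3 * v y * w y ^ 2) / g y ^ 5) / g y)
      (((w4 x * g x ^ 2 - 4 * v x * w x * w3 x - 3 * w x ^ 3) * g x ^ 2
          - 6 * v x * w x * (w3 x * g x ^ 2 - 3 * v x * w x ^ 2)) / g x ^ 8) x := by
  have h := (((hw3.mul (hg.pow 2)).sub ((hv.const_mul 3).mul (hw.pow 2))).div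
      (hg.pow 5) (pow_ne_zero 5 hgne)).div hg hgne
  refine h.congr_deriv ?_
  simp only [Pi.pow_apply, Pi.mul_apply, Pi.sub_apply, Pi.div_apply]
  field_simp
  ring

lemma auxKey (v w w3 w4 g : ℝ) (hg2 : g ^ 2 = 1 + v ^ 2) (hgne : g ≠ 0) :
    ((2 * w4 * g ^ 2 + 4 * v * w * w3 - 10 * w ^ 3 - 20 * v * w * w3) * g ^ 2
        - 7 * v * w * (2 * w3 * g ^ 2 - 10 * v * w ^ 2)) / g ^ 9
      + ((10 * v * w * w3 + 5 * w ^ 3) * g ^ 2 - 35 * v ^ 2 * w ^ 3) / g ^ 9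
    = 2 * (1 / g) *
        (((w4 * g ^ 2 - 4 * v * w * w3 - 3 * w ^ 3) * g ^ 2
            - 6 * v * w * (w3 * g ^ 2 - 3 * v * w ^ 2)) / g ^ 8)
      + (w / g ^ 3) ^ 3 := by
  field_simp
  linear_combination (w ^ 3) * hg2

lemma auxgD {u : ℝ → ℝ} (hu : Differentiable ℝ (deriv u)) (x : ℝ) :
    HasDerivAt (gg u) (deriv u x * deriv (deriv u) x / gg u x) x := by
  have hpos : (0:ℝ) < 1 + deriv u x ^ 2 := by positivity
  have hq : HasDerivAt (fun y => 1 + deriv u y ^ 2) (2 * deriv u x * deriv (deriv u) x) x := by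
    have h := (((hu x).hasDerivAt).pow 2).const_add 1
    refine h.congr_deriv ?_
    ring
  have h := hq.sqrt hpos.ne'
  refine h.congr_deriv ?_
  simp only [gg]
  symm
  rw [div_eq_div_iff (Real.sqrt_ne_zero'.2 hpos) (by positivity)]
  rw [← Real.sqrt_mul_self hpos.le]
  ring

/-- Integration by parts identity:
`∫₀¹ [2u''φ''/|γ'|⁵ − 5(u'')²u'φ'/|γ'|⁷] dx = ∫₀¹ [2|γ'|⁻¹(k'/|γ'|)' + k³] φ dx`
for `u ∈ C⁴` and `φ ∈ C²` compactly supported in `(0,1)`. -/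
theorem stmt10 (u φ : ℝ → ℝ) (hu : ContDiff ℝ 4 u) (hφ : ContDiff ℝ 2 φ)
    (hsupp : tsupport φ ⊆ Set.Ioo (0:ℝ) 1) (hcs : HasCompactSupport φ) :
    (∫ x in (0:ℝ)..1,
        (2 * deriv (deriv u) x * deriv (deriv φ) x / (gg u x) ^ 5 -
          5 * (deriv (deriv u) x) ^ 2 * deriv u x * deriv φ x / (gg u x) ^ 7)) =
      ∫ x in (0:ℝ)..1,
        (2 * (1 / gg u x) * deriv (fun y => deriv (kk u) y / gg u y) x + (kk u x) ^ 3) *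
          φ x := by
  have hv3 : ContDiff ℝ 3 (deriv u) := by simpa using hu.iterate_deriv' 3 1
  have hw2 : ContDiff ℝ 2 (deriv (deriv u)) := by simpa using hv3.iterate_deriv' 2 1
  have hw31 : ContDiff ℝ 1 (deriv (deriv (deriv u))) := by simpa using hw2.iterate_deriv' 1 1
  set v := deriv u with hv_def
  set w := deriv v with hw_def
  set w3 := deriv w with hw3_def
  set w4 := deriv w3 with hw4_def
  set g := gg u with hg_def
  have gpos : ∀ x, 0 < g x := fun x => Real.sqrt_pos.2 (by positivity)
  have gne : ∀ x, g x ≠ 0 := fun x => (gpos x).ne'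
  have hg2 : ∀ x, g x ^ 2 = 1 + v x ^ 2 := fun x => Real.sq_sqrt (by positivity)
  have hvD : ∀ x, HasDerivAt v (w x) x := fun x => (hv3.differentiable (by norm_num) x).hasDerivAt
  have hwD : ∀ x, HasDerivAt w (w3 x) x := fun x => (hw2.differentiable (by norm_num) x).hasDerivAt
  have hw3D : ∀ x, HasDerivAt w3 (w4 x) x := fun x => (hw31.differentiable (by norm_num) x).hasDerivAt
  have hgD : ∀ x, HasDerivAt g (v x * w x / g x) x := fun x =>
    auxgD (hv3.differentiable (by norm_num)) x
  have cv : Continuous v := hv3.continuous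
  have cw : Continuous w := hw2.continuous
  have cw3 : Continuous w3 := hw31.continuous
  have cw4 : Continuous w4 := (contDiff_one_iff_deriv.mp hw31).2
  have cg : Continuous g := (continuous_const.add (cv.pow 2)).sqrt
  -- named derivative functions
  set F1 : ℝ → ℝ := fun x => (2 * w3 x * g x ^ 2 - 10 * v x * w x ^ 2) / g x ^ 7 with hF1_def
  set F2 : ℝ → ℝ := fun x =>
    ((2 * w4 x * g x ^ 2 + 4 * v x * w x * w3 x - 10 * w x ^ 3 - 20 * v x * w x * w3 x) * g x ^ 2
      - 7 * v x * w x * (2 * w3 x * g x ^ 2 - 10 * v x * w x ^ 2)) / g x ^ 9 with hF2_def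
  set G1 : ℝ → ℝ := fun x =>
    ((10 * v x * w x * w3 x + 5 * w x ^ 3) * g x ^ 2 - 35 * v x ^ 2 * w x ^ 3) / g x ^ 9
    with hG1_def
  set K1 : ℝ → ℝ := fun x => (w3 x * g x ^ 2 - 3 * v x * w x ^ 2) / g x ^ 5 with hK1_def
  set K2 : ℝ → ℝ := fun x =>
    ((w4 x * g x ^ 2 - 4 * v x * w x * w3 x - 3 * w x ^ 3) * g x ^ 2
      - 6 * v x * w x * (w3 x * g x ^ 2 - 3 * v x * w x ^ 2)) / g x ^ 8 with hK2_def
  -- derivative facts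
  have hFD : ∀ x, HasDerivAt (fun y => 2 * w y / g y ^ 5) (F1 x) x :=
    fun x => auxF (hwD x) (hgD x) (gne x)
  have hF2D : ∀ x, HasDerivAt F1 (F2 x) x :=
    fun x => auxF2 (hvD x) (hwD x) (hw3D x) (hgD x) (gne x)
  have hGD : ∀ x, HasDerivAt (fun y => 5 * w y ^ 2 * v y / g y ^ 7) (G1 x) x :=
    fun x => auxG (hvD x) (hwD x) (hgD x) (gne x)
  have hKD : ∀ x, HasDerivAt (kk u) (K1 x) x := fun x => auxK (hwD x) (hgD x) (gne x)
  have hK2D : ∀ x, HasDerivAt (fun y => K1 y / g y) (K2 x) x :=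
    fun x => auxK2 (hvD x) (hwD x) (hw3D x) (hgD x) (gne x)
  have hDF : deriv (fun y => 2 * w y / g y ^ 5) = F1 := funext fun x => (hFD x).deriv
  have hDF1 : deriv F1 = F2 := funext fun x => (hF2D x).deriv
  have hDG : deriv (fun y => 5 * w y ^ 2 * v y / g y ^ 7) = G1 := funext fun x => (hGD x).deriv
  have hDK : deriv (kk u) = K1 := funext fun x => (hKD x).deriv
  -- continuity of the explicit derivatives
  have cF : Continuous (fun x => 2 * w x / g x ^ 5) :=
    (continuous_const.mul cw).div (cg.pow 5) (fun x => pow_ne_zero _ (gne x))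
  have cG : Continuous (fun x => 5 * w x ^ 2 * v x / g x ^ 7) :=
    ((continuous_const.mul (cw.pow 2)).mul cv).div (cg.pow 7) (fun x => pow_ne_zero _ (gne x))
  have cF1 : Continuous F1 :=
    (((continuous_const.mul cw3).mul (cg.pow 2)).sub
      ((continuous_const.mul cv).mul (cw.pow 2))).div (cg.pow 7) (fun x => pow_ne_zero _ (gne x))
  have cF2 : Continuous F2 := by
    apply Continuous.div ?_ (cg.pow 9) (fun x => pow_ne_zero _ (gne x))
    exact ((((((continuous_const.mul cw4).mul (cg.pow 2)).add
        (((continuous_const.mul cv).mul cw).mul cw3)).sub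
        (continuous_const.mul (cw.pow 3))).sub
        (((continuous_const.mul cv).mul cw).mul cw3)).mul (cg.pow 2)).sub
        ((((continuous_const.mul cv).mul cw)).mul
          (((continuous_const.mul cw3).mul (cg.pow 2)).sub
            ((continuous_const.mul cv).mul (cw.pow 2))))
  have cG1 : Continuous G1 := by
    apply Continuous.div ?_ (cg.pow 9) (fun x => pow_ne_zero _ (gne x))
    exact ((((((continuous_const.mul cv).mul cw).mul cw3).add
        (continuous_const.mul (cw.pow 3))).mul (cg.pow 2)).sub
        ((continuous_const.mul (cv.pow 2)).mul (cw.pow 3)))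
  -- facts about φ
  have hφ1 : ContDiff ℝ 1 (deriv φ) := by simpa using hφ.iterate_deriv' 1 1
  have hφd : Differentiable ℝ φ := hφ.differentiable (by norm_num)
  have hφ'c : Continuous (deriv φ) := hφ1.continuous
  have hφ'd : Differentiable ℝ (deriv φ) := hφ1.differentiable (by norm_num)
  have hφ''c : Continuous (deriv (deriv φ)) := (contDiff_one_iff_deriv.mp hφ1).2
  have hsupp' : tsupport (deriv φ) ⊆ Set.Ioo (0:ℝ) 1 :=
    subset_trans (closure_minimal support_deriv_subset (isClosed_tsupport φ)) hsupp
  -- integration by parts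
  have step1 : (∫ x in (0:ℝ)..1, (2 * w x / g x ^ 5) * deriv (deriv φ) x)
      = ∫ x in (0:ℝ)..1, F2 x * φ x := by
    rw [my_ibp (fun y => 2 * w y / g y ^ 5) (deriv φ)
        (fun x => (hFD x).differentiableAt) (by rw [hDF]; exact cF1) hφ'd hφ''c hsupp']
    rw [hDF]
    rw [my_ibp F1 φ (fun x => (hF2D x).differentiableAt) (by rw [hDF1]; exact cF2)
        hφd hφ'c hsupp]
    rw [hDF1, neg_neg]
  have step2 : (∫ x in (0:ℝ)..1, (5 * w x ^ 2 * v x / g x ^ 7) * deriv φ x)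
      = - ∫ x in (0:ℝ)..1, G1 x * φ x := by
    rw [my_ibp (fun y => 5 * w y ^ 2 * v y / g y ^ 7) φ
        (fun x => (hGD x).differentiableAt) (by rw [hDG]; exact cG1) hφd hφ'c hsupp]
    rw [hDG]
  -- split LHS
  have intA : IntervalIntegrable (fun x => (2 * w x / g x ^ 5) * deriv (deriv φ) x) volume 0 1 :=
    (cF.mul hφ''c).intervalIntegrable 0 1
  have intB : IntervalIntegrable (fun x => (5 * w x ^ 2 * v x / g x ^ 7) * deriv φ x) volume 0 1 :=
    (cG.mul hφ'c).intervalIntegrable 0 1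
  have intF2 : IntervalIntegrable (fun x => F2 x * φ x) volume 0 1 :=
    (cF2.mul hφd.continuous).intervalIntegrable 0 1
  have intG1 : IntervalIntegrable (fun x => G1 x * φ x) volume 0 1 :=
    (cG1.mul hφd.continuous).intervalIntegrable 0 1
  have lhs_eq : (∫ x in (0:ℝ)..1,
        (2 * w x * deriv (deriv φ) x / g x ^ 5 -
          5 * w x ^ 2 * v x * deriv φ x / g x ^ 7))
      = (∫ x in (0:ℝ)..1, (2 * w x / g x ^ 5) * deriv (deriv φ) x)
        - ∫ x in (0:ℝ)..1, (5 * w x ^ 2 * v x / g x ^ 7) * deriv φ x := by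
    rw [← intervalIntegral.integral_sub intA intB]
    apply intervalIntegral.integral_congr
    intro x _
    ring
  rw [lhs_eq, step1, step2, sub_neg_eq_add]
  rw [← intervalIntegral.integral_add intF2 intG1]
  -- pointwise identity with the RHS
  apply intervalIntegral.integral_congr
  intro x _
  have h1 : deriv (fun y => deriv (kk u) y / g y) x = K2 x := by
    simp only [hDK]
    exact (hK2D x).deriv
  have h2 : kk u x = w x / g x ^ 3 := rfl
  show F2 x * φ x + G1 x * φ x =
    (2 * (1 / g x) * deriv (fun y => deriv (kk u) y / g y) x + kk u x ^ 3) * φ x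
  rw [h1, h2]
  have key := auxKey (v x) (w x) (w3 x) (w4 x) (g x) (hg2 x) (gne x)
  simp only [hF2_def, hG1_def, hK2_def]
  linear_combination φ x * key
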